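/- arXiv:1412.7148 — 2 statements merged into one kernel-verified Lean document; each statement's English description precedes it below -/
import Mathlib

section
/- Let J : 𝕁 ⥤ ℂ be a functor and (L, R, φ) a relative adjunction between J and a category 𝔻. Define T X := R.obj (L.obj X), η_X := φ⁻¹ (id_{L.obj X}) : J.obj X ⟶ T X, and k* := R.map (φ k) : T X ⟶ T Y for every k : J.obj X ⟶ T Y. Then (T, η, (-)*) is a relative monad on J: k* ∘ η_X = k, (η_X)* = id_{T X}, and (ℓ* ∘ k)* = ℓ* ∘ k*. -/
open CategoryTheory

universe w₁ w₂ w₃ u₁ u₂ u₃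

/-- A relative adjunction between `J : 𝕁 ⥤ 𝒞` and a category `𝔻`: functors `L : 𝕁 ⥤ 𝔻`,
`R : 𝔻 ⥤ 𝒞` and bijections `φ_{X,Y} : (J.obj X ⟶ R.obj Y) ≃ (L.obj X ⟶ Y)`
natural in `X` and `Y`. -/
structure RelativeAdjunction {𝕁 : Type u₁} [Category.{w₁} 𝕁] {𝒞 : Type u₂} [Category.{w₂} 𝒞]
    (J : 𝕁 ⥤ 𝒞) (𝔻 : Type u₃) [Category.{w₃} 𝔻] where
  L : 𝕁 ⥤ 𝔻
  R : 𝔻 ⥤ 𝒞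
  φ : ∀ (X : 𝕁) (Y : 𝔻), (J.obj X ⟶ R.obj Y) ≃ (L.obj X ⟶ Y)
  natural_left : ∀ {X' X : 𝕁} (f : X' ⟶ X) {Y : 𝔻} (k : J.obj X ⟶ R.obj Y),
    φ X' Y (J.map f ≫ k) = L.map f ≫ φ X Y k
  natural_right : ∀ {X : 𝕁} {Y Y' : 𝔻} (k : J.obj X ⟶ R.obj Y) (g : Y ⟶ Y'),
    φ X Y' (k ≫ R.map g) = φ X Y k ≫ g

/-- Every relative adjunction `(L, R, φ)` between `J : 𝕁 ⥤ 𝒞` and `𝔻`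
gives rise to a relative monad on `J` via `T X := R (L X)`, `η_X := φ⁻¹ (id)`,
`k* := R.map (φ k)`. -/
theorem relativeAdjunction_gives_relativeMonad
    {𝕁 : Type u₁} [Category.{w₁} 𝕁] {𝒞 : Type u₂} [Category.{w₂} 𝒞]
    {𝔻 : Type u₃} [Category.{w₃} 𝔻]
    (J : 𝕁 ⥤ 𝒞) (A : RelativeAdjunction J 𝔻) :
    -- right unital law : k* ∘ η_X = k
    (∀ (X Y : 𝕁) (k : J.obj X ⟶ A.R.obj (A.L.obj Y)),
        (A.φ X (A.L.obj X)).symm (𝟙 (A.L.obj X)) ≫ A.R.map (A.φ X (A.L.obj Y) k) = k) ∧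
    -- left unital law : (η_X)* = id
    (∀ X : 𝕁,
        A.R.map (A.φ X (A.L.obj X) ((A.φ X (A.L.obj X)).symm (𝟙 (A.L.obj X))))
          = 𝟙 (A.R.obj (A.L.obj X))) ∧
    -- associativity law : (ℓ* ∘ k)* = ℓ* ∘ k*
    (∀ (X Y Z : 𝕁) (k : J.obj X ⟶ A.R.obj (A.L.obj Y)) (ℓ : J.obj Y ⟶ A.R.obj (A.L.obj Z)),
        A.R.map (A.φ X (A.L.obj Z) (k ≫ A.R.map (A.φ Y (A.L.obj Z) ℓ)))
          = A.R.map (A.φ X (A.L.obj Y) k) ≫ A.R.map (A.φ Y (A.L.obj Z) ℓ)) := by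
  refine ⟨fun X Y k => ?_, fun X => ?_, fun X Y Z k ℓ => ?_⟩
  · apply (A.φ X (A.L.obj Y)).injective
    rw [A.natural_right, Equiv.apply_symm_apply, Category.id_comp]
  · rw [Equiv.apply_symm_apply, CategoryTheory.Functor.map_id]
  · rw [A.natural_right, Functor.map_comp]
end

section
/- Let incl : FintypeCat ⥤ Type be the inclusion of finite types into types; pointwise left Kan extensions along incl exist since FintypeCat is essentially small and Type is cocomplete. For every functor F : FintypeCat ⥤ Type, every finite type A and every type Y, the canonical map L : (Lan_incl H).obj Y → (incl.obj A → (Lan_incl F).obj Y) is a bijection, where H : FintypeCat ⥤ Type is the functor with H.obj B := (incl.obj A → F.obj B) (acting by postcomposition with F.map) and L := ⟦fun g => fun k => (ι g) ∘ k⟧ is the unique map satisfying L ∘ ι g = fun k => (ι g) ∘ k for every finite type B and g : incl.obj B → Y. -/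
open CategoryTheory CategoryTheory.Limits

universe w₁ w₂ w₃ u₁ u₂ u₃

/-- A presentation of a pointwise left Kan extension of `F` along `J`, via the coend
formula: cocone maps `ι g` and a unique factorization operation `desc` ( `⟦-⟧` ). -/
structure LanData {𝕁 : Type u₁} [Category.{w₁} 𝕁] {𝒞 : Type u₂} [Category.{w₂} 𝒞]
    {𝔻 : Type u₃} [Category.{w₃} 𝔻] (J : 𝕁 ⥤ 𝒞) (F : 𝕁 ⥤ 𝔻) where
  obj : 𝒞 → 𝔻
  ι : ∀ (Z : 𝕁) {X : 𝒞}, (J.obj Z ⟶ X) → (F.obj Z ⟶ obj X)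
  ι_nat : ∀ {Z Z' : 𝕁} (h : Z ⟶ Z') {X : 𝒞} (g : J.obj Z' ⟶ X),
    ι Z (J.map h ≫ g) = F.map h ≫ ι Z' g
  desc : ∀ {X : 𝒞} {W : 𝔻} (θ : ∀ (Z : 𝕁), (J.obj Z ⟶ X) → (F.obj Z ⟶ W)),
    (∀ {Z Z' : 𝕁} (h : Z ⟶ Z') (g : J.obj Z' ⟶ X), θ Z (J.map h ≫ g) = F.map h ≫ θ Z' g) →
    (obj X ⟶ W)
  fac : ∀ {X : 𝒞} {W : 𝔻} (θ : ∀ (Z : 𝕁), (J.obj Z ⟶ X) → (F.obj Z ⟶ W))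
    (hθ : ∀ {Z Z' : 𝕁} (h : Z ⟶ Z') (g : J.obj Z' ⟶ X), θ Z (J.map h ≫ g) = F.map h ≫ θ Z' g)
    {Z : 𝕁} (g : J.obj Z ⟶ X), ι Z g ≫ desc θ hθ = θ Z g
  uniq : ∀ {X : 𝒞} {W : 𝔻} (θ : ∀ (Z : 𝕁), (J.obj Z ⟶ X) → (F.obj Z ⟶ W))
    (hθ : ∀ {Z Z' : 𝕁} (h : Z ⟶ Z') (g : J.obj Z' ⟶ X), θ Z (J.map h ≫ g) = F.map h ≫ θ Z' g)
    (m : obj X ⟶ W), (∀ (Z : 𝕁) (g : J.obj Z ⟶ X), ι Z g ≫ m = θ Z g) → m = desc θ hθ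


/-- The functor `B ↦ (incl.obj A → F.obj B)` on `FintypeCat`, acting by postcomposition
with `F.map`. -/
def Hfun (F : FintypeCat.{u₁} ⥤ Type u₁) (A : FintypeCat.{u₁}) : FintypeCat.{u₁} ⥤ Type u₁ where
  obj B := FintypeCat.incl.obj A → F.obj B
  map h := TypeCat.ofHom fun k => F.map h ∘ k
  map_id := by intros; ext; simp
  map_comp := by intros; ext; simp

section Aux

instance : RepresentablyCoflat (FintypeCat.incl.{u₁}) :=
  coflat_of_preservesFiniteColimits _

instance auxHasColim (Y : Type u₁) :
    HasColimitsOfShape (CostructuredArrow FintypeCat.incl.{u₁} Y) (Type u₁) :=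
  hasColimitsOfShape_of_equivalence
    (CostructuredArrow.pre FintypeCat.Skeleton.incl FintypeCat.incl Y).asEquivalence

variable {G : FintypeCat.{u₁} ⥤ Type u₁} {Y : Type u₁}

/-- Joint surjectivity of the `ι` of a `LanData`. -/
lemma LanData.exists_rep (L : LanData FintypeCat.incl.{u₁} G) (w : L.obj Y) :
    ∃ (B : FintypeCat.{u₁}) (g : FintypeCat.incl.obj B ⟶ Y) (x : G.obj B),
      L.ι B g x = w := by
  let S : Type u₁ := {w : L.obj Y // ∃ B g x, L.ι B g x = w}
  let θ : ∀ (B : FintypeCat.{u₁}) (g : FintypeCat.incl.obj B ⟶ Y), G.obj B ⟶ S :=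
    fun B g => TypeCat.ofHom fun x => ⟨L.ι B g x, ⟨B, g, x, rfl⟩⟩
  have hθ : ∀ {B B' : FintypeCat.{u₁}} (h : B ⟶ B') (g : FintypeCat.incl.obj B' ⟶ Y),
      θ B (FintypeCat.incl.map h ≫ g) = G.map h ≫ θ B' g := by
    intro B B' h g
    ext x
    exact ConcreteCategory.congr_hom (L.ι_nat h g) x
  have h1 : (L.desc θ hθ ≫ TypeCat.ofHom (Subtype.val : S → L.obj Y)) = L.desc (fun B g => L.ι B g) (fun h g => L.ι_nat h g) := by
    apply L.uniq
    intro B g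
    rw [← Category.assoc, L.fac]
    rfl
  have h2 : (𝟙 (L.obj Y)) = L.desc (fun B g => L.ι B g) (fun h g => L.ι_nat h g) := by
    apply L.uniq
    intro B g
    simp
  have : (L.desc θ hθ w).1 = w := by
    have := ConcreteCategory.congr_hom (h1.trans h2.symm) w
    simpa using this
  rw [← this]
  exact (L.desc θ hθ w).2

/-- The colimit cocone on the comma category induced by a `LanData`. -/
def LanData.cocone (L : LanData FintypeCat.incl.{u₁} G) (Y : Type u₁) :
    Cocone (CostructuredArrow.proj FintypeCat.incl.{u₁} Y ⋙ G) where
  pt := L.obj Y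
  ι :=
    { app := fun j => L.ι j.left j.hom
      naturality := fun j j' m => by
        dsimp
        rw [← CostructuredArrow.w m, L.ι_nat]
        rfl }

lemma LanData.cocone_compat (L : LanData FintypeCat.incl.{u₁} G) {Y : Type u₁}
    (s : Cocone (CostructuredArrow.proj FintypeCat.incl.{u₁} Y ⋙ G))
    {B B' : FintypeCat.{u₁}} (h : B ⟶ B') (g : FintypeCat.incl.obj B' ⟶ Y) :
    s.ι.app (CostructuredArrow.mk (FintypeCat.incl.map h ≫ g)) =
      G.map h ≫ s.ι.app (CostructuredArrow.mk g) := by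
  have := s.ι.naturality
    (CostructuredArrow.homMk h rfl :
      CostructuredArrow.mk (FintypeCat.incl.map h ≫ g) ⟶ CostructuredArrow.mk g)
  dsimp at this ⊢
  exact this.symm

def LanData.isColimit (L : LanData FintypeCat.incl.{u₁} G) (Y : Type u₁) :
    IsColimit (L.cocone Y) where
  desc s := L.desc (fun B g => s.ι.app (CostructuredArrow.mk g))
    (fun h g => L.cocone_compat s h g)
  fac s j := L.fac (fun B g => s.ι.app (CostructuredArrow.mk g))
    (fun h g => L.cocone_compat s h g) j.hom
  uniq s m hm := L.uniq (fun B g => s.ι.app (CostructuredArrow.mk g))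
    (fun h g => L.cocone_compat s h g) m (fun B g => hm (CostructuredArrow.mk g))

lemma LanData.map_rep {Y : Type u₁} (L : LanData FintypeCat.incl.{u₁} G)
    {j j' : CostructuredArrow FintypeCat.incl.{u₁} Y} (h : j ⟶ j') (x : G.obj j.left) :
    L.ι j.left j.hom x = L.ι j'.left j'.hom (G.map h.left x) := by
  rw [← CostructuredArrow.w h, L.ι_nat]
  rfl

/-- Elements with equal images merge at a single later stage. -/
lemma LanData.merge (L : LanData FintypeCat.incl.{u₁} G) {Y : Type u₁}
    {j : CostructuredArrow FintypeCat.incl.{u₁} Y} {x y : G.obj j.left}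
    (hxy : L.ι j.left j.hom x = L.ι j.left j.hom y) :
    ∃ (j' : CostructuredArrow FintypeCat.incl.{u₁} Y) (t : j ⟶ j'),
      G.map t.left x = G.map t.left y := by
  have := (Types.FilteredColimit.isColimit_eq_iff
    (CostructuredArrow.proj FintypeCat.incl.{u₁} Y ⋙ G) (L.isColimit Y)
    (i := j) (j := j) (xi := x) (xj := y)).mp hxy
  obtain ⟨k, f, g, hfg⟩ := this
  refine ⟨IsFiltered.coeq f g, f ≫ IsFiltered.coeqHom f g, ?_⟩
  have hc := IsFiltered.coeq_condition f g
  calc G.map (f ≫ IsFiltered.coeqHom f g).left x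
      = G.map (IsFiltered.coeqHom f g).left (G.map f.left x) := by
        rw [CategoryTheory.Comma.comp_left]; simp
    _ = G.map (IsFiltered.coeqHom f g).left (G.map g.left y) := by
        exact congrArg _ hfg
    _ = G.map (g ≫ IsFiltered.coeqHom f g).left y := by
        rw [CategoryTheory.Comma.comp_left]; simp
    _ = G.map (f ≫ IsFiltered.coeqHom f g).left y := by rw [← hc]

end Aux

/-- STATEMENT 13: for the inclusion `incl : FintypeCat ⥤ Type` (along which pointwise
left Kan extensions exist), for every `F : FintypeCat ⥤ Type`, every finite type `A` and
every type `Y`, the canonical map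
`L := ⟦fun g => fun k => ι g ∘ k⟧ : (Lan_incl (incl.obj A → F.obj -)).obj Y → (incl.obj A → (Lan_incl F).obj Y)`
is a bijection. -/
theorem nerve_preserves_lan_along_fintypecat_inclusion
    (L : ∀ G : FintypeCat.{u₁} ⥤ Type u₁, LanData FintypeCat.incl G)
    (F : FintypeCat.{u₁} ⥤ Type u₁) (A : FintypeCat.{u₁}) (Y : Type u₁) :
    Function.Bijective
      ((L (Hfun F A)).desc
        (fun B (g : FintypeCat.incl.obj B ⟶ Y) => TypeCat.ofHom fun k => (L F).ι B g ∘ k)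
        (by
          intro B B' h g
          dsimp only
          rw [(L F).ι_nat]
          ext k x
          rfl) :
        (L (Hfun F A)).obj Y ⟶ (FintypeCat.incl.obj A → (L F).obj Y)) := by
  classical
  have instA : Fintype (FintypeCat.incl.obj A) := @Fintype.ofFinite _ A.property
  set H := Hfun F A with hH
  set LF := L F
  set LH := L H
  set D := (LH.desc
        (fun B (g : FintypeCat.incl.obj B ⟶ Y) => TypeCat.ofHom fun k => LF.ι B g ∘ k)
        (by
          intro B B' h g
          dsimp only
          rw [LF.ι_nat]
          ext k x
          rfl)) with hD
  have hfac : ∀ (B : FintypeCat.{u₁}) (g : FintypeCat.incl.obj B ⟶ Y) (k : H.obj B),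
      D (LH.ι B g k) = LF.ι B g ∘ k := by
    intro B g k
    exact ConcreteCategory.congr_hom (LH.fac _ _ g) k
  constructor
  · -- injectivity
    intro u v huv
    obtain ⟨Bu, gu, xu, rfl⟩ := LH.exists_rep u
    obtain ⟨Bv, gv, xv, rfl⟩ := LH.exists_rep v
    rw [hfac, hfac] at huv
    have h : ∀ a, LF.ι Bu gu (xu a) = LF.ι Bv gv (xv a) := fun a => congrFun huv a
    set ju : CostructuredArrow FintypeCat.incl.{u₁} Y := CostructuredArrow.mk gu
    set jv : CostructuredArrow FintypeCat.incl.{u₁} Y := CostructuredArrow.mk gv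
    set m₀ := IsFiltered.max ju jv
    set l₁ := IsFiltered.leftToMax ju jv
    set l₂ := IsFiltered.rightToMax ju jv
    set x' : FintypeCat.incl.obj A → F.obj m₀.left := fun a => F.map l₁.left (xu a) with hx'
    set y' : FintypeCat.incl.obj A → F.obj m₀.left := fun a => F.map l₂.left (xv a) with hy'
    have h' : ∀ a, LF.ι m₀.left m₀.hom (x' a) = LF.ι m₀.left m₀.hom (y' a) := by
      intro a
      exact (LF.map_rep l₁ (xu a)).symm.trans ((h a).trans (LF.map_rep l₂ (xv a)))
    have claim : ∀ s : Finset (FintypeCat.incl.obj A),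
        ∃ (m : CostructuredArrow FintypeCat.incl.{u₁} Y) (t : m₀ ⟶ m),
          ∀ a ∈ s, F.map t.left (x' a) = F.map t.left (y' a) := by
      intro s
      induction s using Finset.induction with
      | empty => exact ⟨m₀, 𝟙 m₀, by simp⟩
      | @insert a s ha ih =>
        obtain ⟨m, t, ht⟩ := ih
        have heq : LF.ι m.left m.hom (F.map t.left (x' a)) =
            LF.ι m.left m.hom (F.map t.left (y' a)) := by
          rw [← LF.map_rep t (x' a), ← LF.map_rep t (y' a)]
          exact h' a
        obtain ⟨m₂, t₂, ht₂⟩ := LF.merge heq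
        refine ⟨m₂, t ≫ t₂, ?_⟩
        intro b hb
        rcases Finset.mem_insert.mp hb with hb | hb
        · subst hb
          simpa [CategoryTheory.Comma.comp_left, FunctorToTypes.map_comp_apply] using ht₂
        · have := congrArg (F.map t₂.left) (ht b hb)
          simpa [CategoryTheory.Comma.comp_left, FunctorToTypes.map_comp_apply] using this
    obtain ⟨m, t, hall⟩ := claim Finset.univ
    have key : ∀ (w : H.obj Bu) (jw : CostructuredArrow FintypeCat.incl.{u₁} Y), True := fun _ _ => trivial
    have hu : LH.ι Bu gu xu = LH.ι m.left m.hom (H.map (l₁ ≫ t).left xu) :=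
      LH.map_rep (j := ju) (l₁ ≫ t) xu
    have hv : LH.ι Bv gv xv = LH.ι m.left m.hom (H.map (l₂ ≫ t).left xv) :=
      LH.map_rep (j := jv) (l₂ ≫ t) xv
    rw [hu, hv]
    apply congrArg (LH.ι m.left m.hom)
    funext a
    show F.map (l₁ ≫ t).left (xu a) = F.map (l₂ ≫ t).left (xv a)
    rw [CategoryTheory.Comma.comp_left, CategoryTheory.Comma.comp_left,
      FunctorToTypes.map_comp_apply, FunctorToTypes.map_comp_apply]
    exact hall a (Finset.mem_univ a)
  · -- surjectivity
    intro f
    choose B g x hx using fun a => LF.exists_rep (f a)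
    have claim : ∀ s : Finset (FintypeCat.incl.obj A),
        ∃ (m : CostructuredArrow FintypeCat.incl.{u₁} Y),
          ∀ a ∈ s, ∃ z : F.obj m.left, LF.ι m.left m.hom z = f a := by
      intro s
      induction s using Finset.induction with
      | empty =>
        obtain ⟨m⟩ := IsFiltered.nonempty (C := CostructuredArrow FintypeCat.incl.{u₁} Y)
        exact ⟨m, by simp⟩
      | @insert a s ha ih =>
        obtain ⟨m, hm⟩ := ih
        set ja : CostructuredArrow FintypeCat.incl.{u₁} Y := CostructuredArrow.mk (g a)
        refine ⟨IsFiltered.max m ja, ?_⟩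
        intro b hb
        rcases Finset.mem_insert.mp hb with hb | hb
        · subst hb
          refine ⟨F.map (IsFiltered.rightToMax m ja).left (x b), ?_⟩
          rw [← LF.map_rep (IsFiltered.rightToMax m ja) (x b)]
          exact hx b
        · obtain ⟨z, hz⟩ := hm b hb
          refine ⟨F.map (IsFiltered.leftToMax m ja).left z, ?_⟩
          rw [← LF.map_rep (IsFiltered.leftToMax m ja) z]
          exact hz
    obtain ⟨m, hm⟩ := claim Finset.univ
    choose z hz using fun a => hm a (Finset.mem_univ a)
    refine ⟨LH.ι m.left m.hom z, ?_⟩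
    refine (hfac m.left m.hom z).trans ?_
    funext a
    exact hz a
end
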